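/- Fix τ ∈ (1,2). There exists Δ₀ = Δ₀(τ) > 0 such that for every Δ ∈ 2^{−ℕ} with Δ ≤ Δ₀, Δ^{−τ/2} ∈ ℕ and Δ^{τ/2−1} ∈ ℕ the following holds. Let P' := {(Δ^{τ/2}·k, Δ^{τ/2}·l) : k,l ∈ ℕ, 0 ≤ k,l ≤ Δ^{−τ/2}−1}, θ := Δ^{1−τ/2}, and P := {(x + θy, y) : (x,y) ∈ P'}. Then for every x ∈ (Δ·ℤ) ∩ [1/2, 1] there exists y ∈ [0, 1/2) such that (x, y + m·Δ^{τ−1}) ∈ P for every integer m with 0 ≤ m ≤ (1/2)·Δ^{1−τ}. -/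

import Mathlib

open MeasureTheory Metric Set
open scoped ENNReal NNReal

noncomputable section

/-- The Euclidean plane ℝ². -/
abbrev Plane := EuclideanSpace ℝ (Fin 2)

def ptP (x y : ℝ) : Plane := WithLp.toLp 2 ![x, y]

/-- The dyadic scale `δ = 2^{-K}`. -/
def dyScale (K : ℕ) : ℝ := (2 : ℝ) ^ (-(K : ℤ))

/-- The standard (half-open) dyadic cube of side length `2^{-k}` indexed by `m : Fin d → ℤ`. -/
def dyadicCube (d k : ℕ) (m : Fin d → ℤ) : Set (EuclideanSpace ℝ (Fin d)) :=
  {x | ∀ i, (m i : ℝ) * (2 : ℝ) ^ (-(k : ℤ)) ≤ x i ∧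
            x i < ((m i : ℝ) + 1) * (2 : ℝ) ^ (-(k : ℤ))}

/-- The dyadic `2^{-k}`-covering number in ℝ^d. -/
def covNum (d k : ℕ) (P : Set (EuclideanSpace ℝ (Fin d))) : ℕ :=
  Set.ncard {m : Fin d → ℤ | (dyadicCube d k m ∩ P).Nonempty}

/-- The dyadic `2^{-k}`-covering number of a subset of ℝ. -/
def covNum1 (k : ℕ) (A : Set ℝ) : ℕ :=
  Set.ncard {m : ℤ |
    (Set.Ico ((m : ℝ) * (2 : ℝ) ^ (-(k : ℤ))) (((m : ℝ) + 1) * (2 : ℝ) ^ (-(k : ℤ)))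
      ∩ A).Nonempty}

/-- The grid `P' = {(Δ^{τ/2}k, Δ^{τ/2}l) : 0 ≤ k,l ≤ Δ^{−τ/2}−1}` with `Δ = 2^{-K}`. -/
def PGrid (τ : ℝ) (K : ℕ) : Set Plane :=
  {z | ∃ k l : ℕ, (k : ℝ) + 1 ≤ dyScale K ^ (-(τ / 2)) ∧
        (l : ℝ) + 1 ≤ dyScale K ^ (-(τ / 2)) ∧
        z = ptP (dyScale K ^ (τ / 2) * (k : ℝ)) (dyScale K ^ (τ / 2) * (l : ℝ))}

/-- The sheared grid `P = R_θ(P')` with `θ = Δ^{1−τ/2}`, `R_θ(x,y) = (x+θy, y)`. -/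
def PShear (τ : ℝ) (K : ℕ) : Set Plane :=
  {z | ∃ w ∈ PGrid τ K, z = ptP (w 0 + dyScale K ^ (1 - τ / 2) * w 1) (w 1)}

lemma aux17 (M N n : ℕ) (hM : 1 ≤ M) (hMN : 4*M ≤ N) (hn1 : n ≤ N*M) (hn2 : N*M ≤ 2*n) :
    ∃ k l : ℕ, n = M*k + l ∧ l ≤ M ∧ k + 1 ≤ N ∧
      ∀ m' : ℕ, 2*(m'*M) ≤ N → m' ≤ k ∧ l + m'*M + 1 ≤ N := by
  obtain ⟨N', rfl⟩ : ∃ N', N = N'+1 := ⟨N-1, by omega⟩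
  obtain ⟨q, r, hr, hn⟩ : ∃ q r, r < M ∧ n = M*q + r :=
    ⟨n/M, n%M, Nat.mod_lt n (by omega), (Nat.div_add_mod n M).symm⟩
  by_cases h : q ≤ N'
  · refine ⟨q, r, hn, hr.le, by omega, ?_⟩
    intro m' hm'
    have h2 : 2*(m'*M)*M ≤ (N'+1)*M := Nat.mul_le_mul_right M hm'
    have h3 : m'*M ≤ m'*M*M := Nat.le_mul_of_pos_right _ (by omega)
    have h4 : m'*M ≤ n := by linarith
    constructor
    · by_contra hc
      push_neg at hc
      have h5 : (q+1)*M ≤ m'*M := Nat.mul_le_mul_right M hc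
      linarith
    · linarith
  · push_neg at h
    have hq : N'+1 ≤ q := h
    have hMq : M*(N'+1) ≤ M*q := Nat.mul_le_mul le_rfl hq
    have hsub : M*N' ≤ n := by nlinarith
    have hl : n - M*N' ≤ M := by
      apply Nat.sub_le_iff_le_add.mpr
      nlinarith
    refine ⟨N', n - M*N', (Nat.add_sub_cancel' hsub).symm, hl, by omega, ?_⟩
    intro m' hm'
    have h3 : m' ≤ m'*M := Nat.le_mul_of_pos_right _ (by omega)
    exact ⟨by linarith, by linarith⟩

theorem statement17 (τ : ℝ) (hτ1 : 1 < τ) (hτ2 : τ < 2) :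
    ∃ Δ₀ : ℝ, 0 < Δ₀ ∧
      ∀ K : ℕ, dyScale K ≤ Δ₀ →
        (∃ m : ℕ, dyScale K ^ (-(τ / 2)) = (m : ℝ)) →
        (∃ m : ℕ, dyScale K ^ (τ / 2 - 1) = (m : ℝ)) →
        ∀ x : ℝ, (∃ m : ℤ, x = (m : ℝ) * dyScale K) → 1 / 2 ≤ x → x ≤ 1 →
          ∃ y : ℝ, 0 ≤ y ∧ y < 1 / 2 ∧
            ∀ m : ℕ, (m : ℝ) ≤ 1 / 2 * dyScale K ^ (1 - τ) →
              ptP x (y + (m : ℝ) * dyScale K ^ (τ - 1)) ∈ PShear τ K := by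
  refine ⟨(1/4 : ℝ) ^ ((τ-1)⁻¹ : ℝ), Real.rpow_pos_of_pos (by norm_num) _, ?_⟩
  rintro K hK ⟨N, hN⟩ ⟨M, hM⟩ x ⟨mz, hxeq⟩ hx1 hx2
  set Δ := dyScale K with hΔdef
  have hΔ : 0 < Δ := by rw [hΔdef]; unfold dyScale; positivity
  have hNpos : 0 < (N:ℝ) := by rw [← hN]; positivity
  have hMpos : 0 < (M:ℝ) := by rw [← hM]; positivity
  have hM1 : 1 ≤ M := Nat.cast_pos.mp hMpos
  set a := Δ ^ (τ/2 : ℝ) with ha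
  have hapos : 0 < a := Real.rpow_pos_of_pos hΔ _
  have haN : a * (N:ℝ) = 1 := by
    rw [← hN, ha, ← Real.rpow_add hΔ]
    norm_num
  have hMΔ : (M:ℝ) * Δ = a := by
    have h1 := Real.rpow_add hΔ (τ/2-1) 1
    rw [Real.rpow_one, show τ/2-1+1 = τ/2 by ring] at h1
    rw [← hM, ha, h1]
  have haM : a * (M:ℝ) = Δ ^ (τ-1:ℝ) := by
    rw [ha, ← hM, ← Real.rpow_add hΔ, show τ/2+(τ/2-1) = τ-1 by ring]
  have hsm : Δ ^ (τ-1:ℝ) ≤ 1/4 := by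
    have h1 : Δ ^ (τ-1:ℝ) ≤ ((1/4:ℝ) ^ ((τ-1)⁻¹ : ℝ)) ^ (τ-1:ℝ) :=
      Real.rpow_le_rpow hΔ.le hK (by linarith)
    rwa [← Real.rpow_mul (by norm_num), inv_mul_cancel₀ (ne_of_gt (by linarith : (0:ℝ) < τ-1)),
      Real.rpow_one] at h1
  have hsm' : a * (M:ℝ) ≤ 1/4 := by rw [haM]; exact hsm
  have haMN : a*(M:ℝ)*(N:ℝ) = (M:ℝ) := by
    rw [show a*(M:ℝ)*(N:ℝ) = (M:ℝ)*(a*(N:ℝ)) by ring, haN, mul_one]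
  have h4MN : 4*M ≤ N := by
    have h1 : a*(M:ℝ)*(N:ℝ) ≤ 1/4*(N:ℝ) := mul_le_mul_of_nonneg_right hsm' hNpos.le
    have h2 : (4*M:ℕ) ≤ ((N:ℕ):ℝ) := by push_cast; linarith [haMN ▸ h1]
    exact_mod_cast h2
  -- the integer multiple
  have hmz0 : 0 ≤ mz := by
    by_contra hc
    push_neg at hc
    have h1 : (mz:ℝ) < 0 := by exact_mod_cast hc
    nlinarith
  set n := mz.toNat with hndef
  have hnz : ((n:ℕ):ℝ) = (mz:ℝ) := by
    have := Int.toNat_of_nonneg hmz0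
    exact_mod_cast congrArg (Int.cast : ℤ → ℝ) this
  have hxn : x = (n:ℝ) * Δ := by rw [hxeq, hnz]
  have hNMΔ : (N:ℝ)*(M:ℝ)*Δ = 1 := by rw [mul_assoc, hMΔ, mul_comm]; exact haN
  have hnNM : n ≤ N*M := by
    have h1 : (n:ℝ) ≤ (N:ℝ)*(M:ℝ) := by nlinarith [hxn ▸ hx2]
    exact_mod_cast h1
  have hNM2n : N*M ≤ 2*n := by
    have h1 : (N:ℝ)*(M:ℝ) ≤ 2*(n:ℝ) := by nlinarith [hxn ▸ hx1]
    exact_mod_cast h1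
  obtain ⟨k, l, hneq, hlM, hkN, hforall⟩ := aux17 M N n hM1 h4MN hnNM hNM2n
  refine ⟨a * (l:ℝ), mul_nonneg hapos.le (Nat.cast_nonneg l), ?_, ?_⟩
  · have h1 : a * (l:ℝ) ≤ a * (M:ℝ) :=
      mul_le_mul_of_nonneg_left (by exact_mod_cast hlM) hapos.le
    linarith
  · intro m' hm'
    -- derive the natural-number bound on m'
    have hm'M : 2*(m'*M) ≤ N := by
      have hb : Δ ^ ((1:ℝ)-τ) * Δ ^ (τ-1:ℝ) = 1 := by
        rw [← Real.rpow_add hΔ]; norm_num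
      have hpow : (0:ℝ) ≤ Δ ^ (τ-1:ℝ) := (Real.rpow_pos_of_pos hΔ _).le
      have h1 : (m':ℝ) * (Δ^(τ-1:ℝ)) ≤ (1/2 * Δ^(1-τ:ℝ)) * Δ^(τ-1:ℝ) :=
        mul_le_mul_of_nonneg_right hm' hpow
      rw [mul_assoc, hb, mul_one] at h1
      have h2 : (m':ℝ) * (a*(M:ℝ)) ≤ 1/2 := by rw [haM]; exact h1
      have h3 : (m':ℝ)*(M:ℝ) ≤ 1/2*(N:ℝ) := by
        have h5 : (m':ℝ) * (a*(M:ℝ)) * N ≤ 1/2 * N := mul_le_mul_of_nonneg_right h2 hNpos.le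
        calc (m':ℝ)*(M:ℝ) = (m':ℝ)*(a*(M:ℝ)*(N:ℝ)) := by rw [haMN]
          _ = (m':ℝ)*(a*(M:ℝ))*(N:ℝ) := by ring
          _ ≤ 1/2*(N:ℝ) := h5
      have h4 : ((2*(m'*M):ℕ):ℝ) ≤ ((N:ℕ):ℝ) := by push_cast; linarith
      exact_mod_cast h4
    obtain ⟨hm'k, hlm'⟩ := hforall m' hm'M
    have hknat : ((k - m' : ℕ):ℝ) = (k:ℝ) - (m':ℝ) := by
      exact Nat.cast_sub hm'k
    have hlnat : ((l + m'*M : ℕ):ℝ) = (l:ℝ) + (m':ℝ)*(M:ℝ) := by push_cast; ring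
    have hnr : (n:ℝ) = (M:ℝ)*(k:ℝ) + (l:ℝ) := by exact_mod_cast hneq
    have hb1 : Δ^((1:ℝ) - τ/2) * a = Δ := by
      rw [ha, ← Real.rpow_add hΔ, show (1:ℝ) - τ/2 + τ/2 = 1 by ring, Real.rpow_one]
    refine ⟨ptP (a * ((k - m' : ℕ):ℝ)) (a * ((l + m'*M : ℕ):ℝ)),
      ⟨k - m', l + m'*M, ?_, ?_, rfl⟩, ?_⟩
    · rw [hN]
      have : (k - m') + 1 ≤ N := by omega
      exact_mod_cast this
    · rw [hN]
      exact_mod_cast hlm'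
    · have hAx : a * ((k - m' : ℕ):ℝ) + Δ^((1:ℝ)-τ/2) * (a * ((l + m'*M : ℕ):ℝ)) = x := by
        rw [hxn, hknat, hlnat, hnr]
        linear_combination ((l:ℝ) + (m':ℝ)*(M:ℝ)) * hb1 + ((m':ℝ) - (k:ℝ)) * hMΔ
      have hBy : a * ((l + m'*M : ℕ):ℝ) = a*(l:ℝ) + (m':ℝ)*Δ^(τ-1:ℝ) := by
        rw [hlnat, ← haM]; ring
      show ptP x (a*(l:ℝ) + (m':ℝ)*Δ^(τ-1:ℝ)) =
        ptP (a * ((k - m' : ℕ):ℝ) + Δ^((1:ℝ)-τ/2) * (a * ((l + m'*M : ℕ):ℝ)))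
          (a * ((l + m'*M : ℕ):ℝ))
      rw [hAx, hBy]
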